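/- Let a > 0 and let b be differentiable with b'(s)/s → 0 as s → ∞. Define f(s) = exp(a s² + b(s)). Then for any fixed s₁ > 0, (s² · ∫_{s₁}^{s} (f(z)/z) dz) / f(s) → 1/(2a) as s → ∞. -/

import Mathlib

/-!
Write the quotient as `G / H` with `G s = ∫_{s₁}^s f z / z dz` and `H s = f s / s²`. Since
`b' s / s → 0`, l'Hôpital gives `b s = o(s²)`, so `H s → ∞`, and
`G' / H' = 1 / (2a + b' s / s - 2 / s²) → 1 / (2a)`. The `∞ / ∞` form of l'Hôpital's rule at `+∞`
follows by integrating `G' ≤ m H'` from a fixed point and dividing by `H s → ∞`.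
-/

open Filter Real Set Topology

lemma sub_le_sub_of_hasDerivAt_le {g h g' h' : ℝ → ℝ} {c s : ℝ} (hcs : c ≤ s)
    (hg : ∀ x ≥ c, HasDerivAt g (g' x) x) (hh : ∀ x ≥ c, HasDerivAt h (h' x) x)
    (hle : ∀ x ≥ c, g' x ≤ h' x) : g s - g c ≤ h s - h c := by
  have hmono : MonotoneOn (fun x => h x - g x) (Ici c) := by
    refine monotoneOn_of_hasDerivWithinAt_nonneg (convex_Ici c) (f' := fun x => h' x - g' x)
      (fun x hx => ((hh x hx).sub (hg x hx)).continuousAt.continuousWithinAt)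
      (fun x hx => ((hh x ?_).sub (hg x ?_)).hasDerivWithinAt) (fun x hx => ?_)
    all_goals rw [interior_Ici] at hx
    · exact le_of_lt hx
    · exact le_of_lt hx
    · exact sub_nonneg.2 (hle x (le_of_lt hx))
  have := hmono self_mem_Ici hcs hcs
  simp only at this
  linarith

lemma eventually_div_lt_of_eventually_deriv_div_lt {G H G' H' : ℝ → ℝ} {m u : ℝ} (hmu : m < u)
    (hG : ∀ᶠ x in atTop, HasDerivAt G (G' x) x) (hH : ∀ᶠ x in atTop, HasDerivAt H (H' x) x)
    (hH' : ∀ᶠ x in atTop, 0 < H' x) (hHtop : Tendsto H atTop atTop)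
    (hderiv : ∀ᶠ x in atTop, G' x / H' x < m) : ∀ᶠ x in atTop, G x / H x < u := by
  obtain ⟨c, hc⟩ := eventually_atTop.1 (hG.and (hH.and (hH'.and hderiv)))
  have hbound : ∀ s ≥ c, G s - G c ≤ m * H s - m * H c :=
    fun s hs => sub_le_sub_of_hasDerivAt_le hs (fun x hx => (hc x hx).1)
      (fun x hx => (hc x hx).2.1.const_mul m)
      (fun x hx => ((div_lt_iff₀ (hc x hx).2.2.1).1 (hc x hx).2.2.2).le)
  have hrem : Tendsto (fun s => (G c - m * H c) / H s) atTop (𝓝 0) :=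
    tendsto_const_nhds.div_atTop hHtop
  filter_upwards [eventually_ge_atTop c, hHtop.eventually_gt_atTop 0,
    (tendsto_order.1 hrem).2 (u - m) (sub_pos.2 hmu)] with s hs hHs hsmall
  calc G s / H s ≤ m + (G c - m * H c) / H s := by
        rw [div_le_iff₀ hHs, add_mul, div_mul_cancel₀ _ hHs.ne']
        linarith [hbound s hs]
    _ < u := by linarith

theorem lhopital_atTop_of_tendsto_atTop {G H G' H' : ℝ → ℝ} {L : ℝ}
    (hG : ∀ᶠ x in atTop, HasDerivAt G (G' x) x) (hH : ∀ᶠ x in atTop, HasDerivAt H (H' x) x)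
    (hH' : ∀ᶠ x in atTop, 0 < H' x) (hHtop : Tendsto H atTop atTop)
    (hlim : Tendsto (fun x => G' x / H' x) atTop (𝓝 L)) :
    Tendsto (fun x => G x / H x) atTop (𝓝 L) := by
  refine tendsto_order.2 ⟨fun l hl => ?_, fun u hu => ?_⟩
  · obtain ⟨m, hlm, hmL⟩ := exists_between hl
    have hneg := eventually_div_lt_of_eventually_deriv_div_lt (G := -G) (G' := -G')
      (neg_lt_neg hlm) (hG.mono fun x hx => hx.neg) hH hH' hHtop
      ((tendsto_order.1 hlim).1 m hmL |>.mono fun x hx => by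
        simpa [neg_div] using hx)
    filter_upwards [hneg] with x hx
    simpa [neg_div] using hx
  · obtain ⟨m, hLm, hmu⟩ := exists_between hu
    exact eventually_div_lt_of_eventually_deriv_div_lt hmu hG hH hH' hHtop
      ((tendsto_order.1 hlim).2 m hLm)

lemma tendsto_div_sq_of_tendsto_deriv_div {b : ℝ → ℝ} (hb : Differentiable ℝ b)
    (hb' : Tendsto (fun s => deriv b s / s) atTop (𝓝 0)) :
    Tendsto (fun s => b s / s ^ 2) atTop (𝓝 0) := by
  refine lhopital_atTop_of_tendsto_atTop (G' := deriv b) (H' := fun s => 2 * s)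
    (Eventually.of_forall fun s => (hb s).hasDerivAt)
    (Eventually.of_forall fun s => by simpa using hasDerivAt_pow 2 s)
    (eventually_gt_atTop 0 |>.mono fun s hs => by positivity)
    (tendsto_pow_atTop two_ne_zero) ?_
  simpa [div_mul_eq_div_div_swap] using hb'.div_const 2

lemma tendsto_exp_div_sq_atTop {a : ℝ} (ha : 0 < a) {b : ℝ → ℝ}
    (hb : Tendsto (fun s => b s / s ^ 2) atTop (𝓝 0)) :
    Tendsto (fun s => exp (a * s ^ 2 + b s) / s ^ 2) atTop atTop := by
  have hexponent : Tendsto (fun s => s ^ 2 * (a + b s / s ^ 2 - 2 / s)) atTop atTop := by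
    refine (tendsto_pow_atTop two_ne_zero).atTop_mul_pos ha ?_
    simpa using (tendsto_const_nhds.add hb).sub (tendsto_const_nhds.div_atTop tendsto_id)
  refine tendsto_atTop_mono' _ ?_ (tendsto_exp_atTop.comp hexponent)
  filter_upwards [eventually_gt_atTop 0] with s hs
  have hsq : s ^ 2 ≤ exp (2 * s) := by
    rw [two_mul, exp_add, sq]
    have hs_le : s ≤ exp s := (le_add_of_nonneg_right zero_le_one).trans (add_one_le_exp s)
    gcongr
  rw [Function.comp_apply, le_div_iff₀ (by positivity)]
  calc exp (s ^ 2 * (a + b s / s ^ 2 - 2 / s)) * s ^ 2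
      ≤ exp (a * s ^ 2 + b s - 2 * s) * exp (2 * s) := by
        have : s ^ 2 * (a + b s / s ^ 2 - 2 / s) = a * s ^ 2 + b s - 2 * s := by
          field_simp
        rw [this]
        gcongr
    _ = exp (a * s ^ 2 + b s) := by rw [← exp_add, sub_add_cancel]

lemma hasDerivAt_exp_div_sq (a : ℝ) {b : ℝ → ℝ} (hb : Differentiable ℝ b) {s : ℝ} (hs : s ≠ 0) :
    HasDerivAt (fun s => exp (a * s ^ 2 + b s) / s ^ 2)
      (exp (a * s ^ 2 + b s) / s * (2 * a + deriv b s / s - 2 / s ^ 2)) s := by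
  have hexp := (((hasDerivAt_pow 2 s).const_mul a).fun_add (hb s).hasDerivAt).exp
  refine (hexp.div (hasDerivAt_pow 2 s) (pow_ne_zero 2 hs)).congr_deriv ?_
  field_simp
  ring

lemma hasDerivAt_integral_div_self {f : ℝ → ℝ} (hf : Continuous f) {s₁ s : ℝ} (hs₁ : 0 < s₁)
    (hs : 0 < s) : HasDerivAt (fun t => ∫ z in s₁..t, f z / z) (f s / s) s := by
  have hcont : ContinuousOn (fun z => f z / z) (Ioi 0) :=
    hf.continuousOn.div continuousOn_id fun z hz => ne_of_gt hz
  refine intervalIntegral.integral_hasDerivAt_right ?_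
    (hcont.stronglyMeasurableAtFilter isOpen_Ioi s hs) (hcont.continuousAt (Ioi_mem_nhds hs))
  exact (hcont.mono fun z hz => lt_of_lt_of_le (lt_min hs₁ hs) hz.1).intervalIntegrable

theorem stmt_4 (a : ℝ) (ha : 0 < a) (b : ℝ → ℝ) (hb : Differentiable ℝ b)
    (hb' : Tendsto (fun s => deriv b s / s) atTop (nhds 0))
    (f : ℝ → ℝ) (hf : ∀ s, f s = Real.exp (a * s ^ 2 + b s)) (s₁ : ℝ) (hs₁ : 0 < s₁) :
    Tendsto (fun s => (s ^ 2 * ∫ z in s₁..s, f z / z) / f s) atTop (nhds (1 / (2 * a))) := by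
  obtain rfl : f = fun s => exp (a * s ^ 2 + b s) := funext hf
  have hb_cont := hb.continuous
  set q : ℝ → ℝ := fun s => 2 * a + deriv b s / s - 2 / s ^ 2
  have hq : Tendsto q atTop (𝓝 (2 * a)) := by
    simpa using (tendsto_const_nhds.add hb').sub
      (tendsto_const_nhds.div_atTop (tendsto_pow_atTop two_ne_zero))
  have hG : ∀ᶠ s in atTop, HasDerivAt (fun t => ∫ z in s₁..t, exp (a * z ^ 2 + b z) / z)
      (exp (a * s ^ 2 + b s) / s) s :=
    eventually_gt_atTop 0 |>.mono fun s hs => hasDerivAt_integral_div_self (by fun_prop) hs₁ hs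
  have hH : ∀ᶠ s in atTop, HasDerivAt (fun t => exp (a * t ^ 2 + b t) / t ^ 2)
      (exp (a * s ^ 2 + b s) / s * q s) s :=
    eventually_gt_atTop 0 |>.mono fun s hs => hasDerivAt_exp_div_sq a hb hs.ne'
  have hH'_pos : ∀ᶠ s in atTop, 0 < exp (a * s ^ 2 + b s) / s * q s := by
    filter_upwards [eventually_gt_atTop 0, hq.eventually (lt_mem_nhds (by positivity))]
      with s hs hqs
    positivity
  have hratio : Tendsto (fun s => exp (a * s ^ 2 + b s) / s / (exp (a * s ^ 2 + b s) / s * q s))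
      atTop (𝓝 (1 / (2 * a))) := by
    rw [one_div]
    refine (hq.inv₀ (by positivity)).congr' ?_
    filter_upwards [eventually_gt_atTop 0] with s hs
    field_simp
  have hlim := lhopital_atTop_of_tendsto_atTop hG hH hH'_pos
    (tendsto_exp_div_sq_atTop ha (tendsto_div_sq_of_tendsto_deriv_div hb hb')) hratio
  simpa [div_div_eq_mul_div, mul_comm] using hlim
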